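/- Let n ≥ 1, let a, b ∈ ℝⁿ with a ≤ b componentwise, let T be a divergence-free symmetric 2-tensor field of class C¹ on ℝⁿ, and let X be a C¹ conformal Killing field on ℝⁿ. Then the total outward flux of the vector field T♯X through the boundary of the rectangular box [a, b] equals the bulk integral of (1/n)·(trace T)·(div X): Σᵢ [ ∫_{face xᵢ = bᵢ} ⟪(T♯X) y, eᵢ⟫ dy − ∫_{face xᵢ = aᵢ} ⟪(T♯X) y, eᵢ⟫ dy ] = (1/n)·∫_{[a,b]} (trace of T x)·(div X x) dx, where the face integrals are over the (n−1)-dimensional faces of the box. (This is the flat-space integrated Bianchi identity of Lemma 2.1 of the paper, stated on rectangular boxes so that the divergence theorem applies.) -/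

import Mathlib

open MeasureTheory

/-!
By the divergence theorem the flux of `Y = T♯X` through the boundary of the box is the integral
of `div Y`, and pointwise `div Y = Σᵢ T(∂ᵢX, eᵢ) + Σᵢ (∂ᵢT)(X, eᵢ)`. Each `∂ᵢT` is symmetric
because `T` is, so the second sum is `(div T)(X) = 0`. In the first sum the symmetric form `T`
only sees the symmetric part of `DX`, which for a conformal Killing field is
`(div X / (n + 1)) • id`; this leaves `tr T · div X / (n + 1)`.
-/

/-- The `i`-th standard basis vector of `ℝⁿ⁺¹ = Fin (n+1) → ℝ`. -/
noncomputable def stdBasis (n : ℕ) (i : Fin (n + 1)) : Fin (n + 1) → ℝ :=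
  Pi.single i (1 : ℝ)

/-- The Euclidean divergence of a vector field on `ℝⁿ⁺¹`: the trace of its derivative. -/
noncomputable def divE (n : ℕ) (X : (Fin (n + 1) → ℝ) → (Fin (n + 1) → ℝ))
    (x : Fin (n + 1) → ℝ) : ℝ :=
  ∑ i : Fin (n + 1), fderiv ℝ X x (stdBasis n i) i

theorem fderiv_apply_comm {𝕜 E F G : Type*} [NontriviallyNormedField 𝕜]
    [NormedAddCommGroup E] [NormedSpace 𝕜 E] [NormedAddCommGroup F] [NormedSpace 𝕜 F]
    [NormedAddCommGroup G] [NormedSpace 𝕜 G] {T : E → F →L[𝕜] F →L[𝕜] G}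
    (hT : ∀ y v w, T y v w = T y w v) (x h : E) (v w : F) :
    fderiv 𝕜 T x h v w = fderiv 𝕜 T x h w v := by
  have hflip : ContinuousLinearMap.flipₗᵢ 𝕜 F F G ∘ T = T :=
    funext fun y => ContinuousLinearMap.ext fun v => ContinuousLinearMap.ext fun w => hT y w v
  -- the explicit types let the seminormed instances of `flipₗᵢ` unify with the normed ones
  have h_comp := LinearIsometryEquiv.comp_fderiv (𝕜 := 𝕜) (E := F →L[𝕜] F →L[𝕜] G)
    (F := F →L[𝕜] F →L[𝕜] G) (iso := ContinuousLinearMap.flipₗᵢ 𝕜 F F G) (f := T) (x := x)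
  rw [hflip] at h_comp
  exact congr($h_comp h v w)

theorem two_mul_sum_apply_single_of_conformal {ι : Type*} [Fintype ι] [DecidableEq ι]
    (B : (ι → ℝ) →L[ℝ] (ι → ℝ) →L[ℝ] ℝ)
    (hB : ∀ v w, B v w = B w v) (A : (ι → ℝ) → ι → ℝ) (c : ℝ)
    (hA : ∀ v w, ∑ i, A v i * w i + ∑ i, A w i * v i = c * ∑ i, v i * w i) :
    2 * ∑ i, B (A (Pi.single i 1)) (Pi.single i 1) =
      c * ∑ i, B (Pi.single i 1) (Pi.single i 1) := by
  set e : ι → ι → ℝ := fun i => Pi.single i 1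
  have hA_single (i j : ι) : A (e i) j + A (e j) i = c * if j = i then 1 else 0 := by
    have h := hA (e i) (e j)
    change A (e i) ⬝ᵥ e j + A (e j) ⬝ᵥ e i = c * (e i ⬝ᵥ e j) at h
    rw [dotProduct_single_one, dotProduct_single_one, dotProduct_single_one] at h
    simpa only [e, Pi.single_apply] using h
  have h_expand (i : ι) : B (A (e i)) (e i) = ∑ j, A (e i) j * B (e j) (e i) := by
    conv_lhs => rw [pi_eq_sum_univ' (A (e i))]
    simp only [map_sum, map_smul, sum_apply, smul_apply, smul_eq_mul, e]
  have h_swap :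
      ∑ i, ∑ j, A (e i) j * B (e j) (e i) = ∑ i, ∑ j, A (e j) i * B (e j) (e i) := by
    rw [Finset.sum_comm]
    exact Finset.sum_congr rfl fun i _ => Finset.sum_congr rfl fun j _ => by rw [hB]
  calc 2 * ∑ i, B (A (e i)) (e i)
      = ∑ i, ∑ j, (A (e i) j + A (e j) i) * B (e j) (e i) := by
        simp only [h_expand, two_mul]
        nth_rewrite 2 [h_swap]
        simp only [← Finset.sum_add_distrib, add_mul]
    _ = c * ∑ i, B (e i) (e i) := by
        simp only [hA_single, mul_ite, mul_one, mul_zero, ite_mul, zero_mul,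
          Finset.sum_ite_eq', Finset.mem_univ, if_true, Finset.mul_sum]

section Sharp

variable {ι E F : Type*} [Fintype ι] [DecidableEq ι] [NormedAddCommGroup F] [NormedSpace ℝ F]

noncomputable def sharp (T : E → F →L[ℝ] (ι → ℝ) →L[ℝ] ℝ) (X : E → F) : E → ι → ℝ :=
  fun x j => T x (X x) (Pi.single j 1)

variable {T : E → F →L[ℝ] (ι → ℝ) →L[ℝ] ℝ} {X : E → F}

theorem eq_sharp_of_sum_mul_eq {Y : E → ι → ℝ}
    (hY : ∀ x w, ∑ i, Y x i * w i = T x (X x) w) : Y = sharp T X :=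
  funext fun x => funext fun j => by
    rw [sharp, ← hY, ← dotProduct, dotProduct_single_one]

theorem ContDiff.sharp [NormedAddCommGroup E] [NormedSpace ℝ E] {k : WithTop ℕ∞}
    (hT : ContDiff ℝ k T) (hX : ContDiff ℝ k X) :
    ContDiff ℝ k (sharp T X) :=
  contDiff_pi.2 fun _ => (hT.clm_apply hX).clm_apply contDiff_const

theorem fderiv_sharp_apply [NormedAddCommGroup E] [NormedSpace ℝ E] {x : E}
    (hT : DifferentiableAt ℝ T x) (hX : DifferentiableAt ℝ X x) (v : E) (j : ι) :
    fderiv ℝ (sharp T X) x v j =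
      T x (fderiv ℝ X x v) (Pi.single j 1) + fderiv ℝ T x v (X x) (Pi.single j 1) := by
  have hTX : DifferentiableAt ℝ (fun y => T y (X y)) x := hT.clm_apply hX
  change fderiv ℝ (fun y j => T y (X y) (Pi.single j 1)) x v j = _
  rw [fderiv_pi fun j => hTX.clm_apply (differentiableAt_const _),
    ContinuousLinearMap.pi_apply, fderiv_clm_apply hTX (differentiableAt_const _),
    fderiv_clm_apply hT hX]
  simp only [fderiv_fun_const, Pi.zero_apply, ContinuousLinearMap.comp_zero,
    ContinuousLinearMap.flip_add, add_apply, zero_add, ContinuousLinearMap.flip_apply,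
    ContinuousLinearMap.comp_apply]

end Sharp

theorem flux_eq_integral_divE {n : ℕ} {a b : Fin (n + 1) → ℝ} (hab : a ≤ b)
    {Y : (Fin (n + 1) → ℝ) → Fin (n + 1) → ℝ} (hY : ContDiff ℝ 1 Y) :
    ∑ i : Fin (n + 1),
        ((∫ y in Set.Icc (a ∘ i.succAbove) (b ∘ i.succAbove), Y (i.insertNth (b i) y) i) -
          ∫ y in Set.Icc (a ∘ i.succAbove) (b ∘ i.succAbove), Y (i.insertNth (a i) y) i) =
      ∫ x in Set.Icc a b, divE n Y x := by
  have h_cont : Continuous (divE n Y) :=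
    continuous_finsetSum _ fun i _ => continuous_apply i |>.comp <|
      (hY.continuous_fderiv one_ne_zero).clm_apply continuous_const
  exact (integral_divergence_of_hasFDerivAt_off_countable a b hab Y (fderiv ℝ Y) ∅
    Set.countable_empty hY.continuous.continuousOn
    (fun x _ => (hY.differentiable one_ne_zero x).hasFDerivAt)
    (h_cont.continuousOn.integrableOn_compact isCompact_Icc)).symm

theorem divE_sharp_of_conformal {n : ℕ}
    {T : (Fin (n + 1) → ℝ) → (Fin (n + 1) → ℝ) →L[ℝ] (Fin (n + 1) → ℝ) →L[ℝ] ℝ}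
    {X : (Fin (n + 1) → ℝ) → Fin (n + 1) → ℝ} {x : Fin (n + 1) → ℝ}
    (hT : DifferentiableAt ℝ T x) (hTsymm : ∀ y v w, T y v w = T y w v)
    (hTdivfree : ∀ v, ∑ i, fderiv ℝ T x (stdBasis n i) (stdBasis n i) v = 0)
    (hX : DifferentiableAt ℝ X x)
    (hCK : ∀ v w, (∑ i, fderiv ℝ X x v i * w i) + (∑ i, fderiv ℝ X x w i * v i) =
      (2 / ((n : ℝ) + 1)) * divE n X x * ∑ i, v i * w i) :
    divE n (sharp T X) x =
      (1 / ((n : ℝ) + 1)) * ((∑ i, T x (stdBasis n i) (stdBasis n i)) * divE n X x) := by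
  have h_div : divE n (sharp T X) x =
      ∑ i, T x (fderiv ℝ X x (stdBasis n i)) (stdBasis n i) +
        ∑ i, fderiv ℝ T x (stdBasis n i) (X x) (stdBasis n i) := by
    simp only [divE, fderiv_sharp_apply hT hX, Finset.sum_add_distrib, stdBasis]
  have h_zero : ∑ i, fderiv ℝ T x (stdBasis n i) (X x) (stdBasis n i) = 0 := by
    rw [← hTdivfree (X x)]
    exact Finset.sum_congr rfl fun i _ => fderiv_apply_comm hTsymm x _ _ _
  have h_trace : 2 * ∑ i, T x (fderiv ℝ X x (stdBasis n i)) (stdBasis n i) =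
      2 / ((n : ℝ) + 1) * divE n X x * ∑ i, T x (stdBasis n i) (stdBasis n i) :=
    two_mul_sum_apply_single_of_conformal (T x) (hTsymm x) (fderiv ℝ X x) _ hCK
  rw [h_div, h_zero, add_zero]
  field_simp at h_trace ⊢
  linarith

/-- **Flat-space integrated Bianchi identity on rectangular boxes (Lemma 2.1).**
Let `T` be a divergence-free symmetric 2-tensor field of class `C¹` on `ℝⁿ⁺¹`, let `X` be a
`C¹` conformal Killing field, and let `Y = T♯X` be the vector field defined by
`⟪Y x, w⟫ = (T x)(X x, w)`. Then the total outward flux of `Y` through the boundary of a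
rectangular box `[a, b]` equals `1/(n+1)` times the bulk integral of `(tr T)·(div X)`. -/
theorem flux_eq_bulk_integral_trace_div
    (n : ℕ) (a b : Fin (n + 1) → ℝ) (hab : a ≤ b)
    (T : (Fin (n + 1) → ℝ) →
      ((Fin (n + 1) → ℝ) →L[ℝ] (Fin (n + 1) → ℝ) →L[ℝ] ℝ))
    (hT : ContDiff ℝ 1 T)
    (hTsymm : ∀ x v w, T x v w = T x w v)
    (hTdivfree : ∀ (x v : Fin (n + 1) → ℝ),
      ∑ i : Fin (n + 1), fderiv ℝ T x (stdBasis n i) (stdBasis n i) v = 0)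
    (X : (Fin (n + 1) → ℝ) → (Fin (n + 1) → ℝ))
    (hX : ContDiff ℝ 1 X)
    (hCK : ∀ (x v w : Fin (n + 1) → ℝ),
      (∑ i : Fin (n + 1), fderiv ℝ X x v i * w i) +
          (∑ i : Fin (n + 1), fderiv ℝ X x w i * v i) =
        (2 / ((n : ℝ) + 1)) * divE n X x * ∑ i : Fin (n + 1), v i * w i)
    (Y : (Fin (n + 1) → ℝ) → (Fin (n + 1) → ℝ))
    (hY : ∀ (x w : Fin (n + 1) → ℝ),
      ∑ i : Fin (n + 1), Y x i * w i = T x (X x) w) :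
    ∑ i : Fin (n + 1),
        ((∫ y in Set.Icc (a ∘ i.succAbove) (b ∘ i.succAbove),
            Y (i.insertNth (b i) y) i) -
          ∫ y in Set.Icc (a ∘ i.succAbove) (b ∘ i.succAbove),
            Y (i.insertNth (a i) y) i) =
      (1 / ((n : ℝ) + 1)) * ∫ x in Set.Icc a b,
        (∑ i : Fin (n + 1), T x (stdBasis n i) (stdBasis n i)) * divE n X x := by
  have hYeq : Y = sharp T X := eq_sharp_of_sum_mul_eq hY
  have h_bulk : ∀ x, divE n Y x =
      (1 / ((n : ℝ) + 1)) * ((∑ i, T x (stdBasis n i) (stdBasis n i)) * divE n X x) := by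
    intro x
    rw [hYeq]
    exact divE_sharp_of_conformal (hT.differentiable one_ne_zero x) hTsymm (hTdivfree x)
      (hX.differentiable one_ne_zero x) (hCK x)
  rw [flux_eq_integral_divE hab (hYeq ▸ hT.sharp hX)]
  simp only [h_bulk]
  exact integral_const_mul _ _
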